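/- arXiv:1511.04679 — 2 statements merged into one kernel-verified Lean document; each statement's English description precedes it below -/
import Mathlib

section
/- Every torsion-free abelian group is orderable: there exists a linear order on it compatible with addition. -/
/-! A torsion-free group embeds into its divisible hull, a ℚ-vector space. A basis identifies that
space with `ι →₀ ℚ`, which is ordered lexicographically once `ι` is well ordered, and orders
compatible with addition pull back along injective additive maps. -/

def AddOrderable (A : Type*) [Add A] : Prop :=
  ∃ le : A → A → Prop, IsLinearOrder A le ∧ ∀ a b c : A, le a b → le (a + c) (b + c)

namespace AddOrderable

theorem of_addRightMono (B : Type*) [Add B] [LinearOrder B] [AddRightMono B] :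
    AddOrderable B :=
  ⟨(· ≤ ·), inferInstance, fun _ _ c h ↦ add_le_add_left h c⟩

theorem of_injective {A B F : Type*} [Add A] [Add B] [FunLike F A B] [AddHomClass F A B]
    (f : F) (hf : Function.Injective f) (hB : AddOrderable B) : AddOrderable A := by
  obtain ⟨le, hle, hadd⟩ := hB
  refine ⟨fun a b ↦ le (f a) (f b),
    { refl := fun a ↦ hle.refl (f a)
      trans := fun _ _ _ ↦ hle.trans _ _ _
      antisymm := fun _ _ h₁ h₂ ↦ hf (hle.antisymm _ _ h₁ h₂)
      total := fun a b ↦ hle.total (f a) (f b) }, fun a b c h ↦ ?_⟩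
  simpa only [map_add] using hadd _ _ (f c) h

/- Strict monotonicity is needed: the lexicographic sum need not be monotone when addition on `G`
merely is. -/
theorem finsupp (ι G : Type*) [AddMonoid G] [LinearOrder G] [AddRightStrictMono G] :
    AddOrderable (ι →₀ G) := by
  classical
  let : LinearOrder ι := linearOrderOfSTO WellOrderingRel
  exact of_injective (toLexAddEquiv (ι →₀ G)) (toLexAddEquiv _).injective
    (of_addRightMono (Lex (ι →₀ G)))

theorem of_free (R V : Type*) [Semiring R] [LinearOrder R] [AddRightStrictMono R]
    [AddCommMonoid V] [Module R V] [Module.Free R V] : AddOrderable V :=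
  let b := Module.Free.chooseBasis R V
  of_injective b.repr b.repr.injective (finsupp _ R)

theorem of_isAddTorsionFree (A : Type*) [AddCommGroup A] [IsAddTorsionFree A] :
    AddOrderable A :=
  of_injective (DivisibleHull.coeAddMonoidHom A) DivisibleHull.coe_injective
    (of_free ℚ (DivisibleHull A))

end AddOrderable

theorem stmt3 {A : Type*} [AddCommGroup A]
    (htf : ∀ (n : ℕ) (a : A), 1 ≤ n → n • a = 0 → a = 0) :
    ∃ le : A → A → Prop, IsLinearOrder A le ∧
      ∀ a b c : A, le a b → le (a + c) (b + c) := by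
  have : IsAddTorsionFree A := .of_not_isOfFinAddOrder fun a ha hfin ↦ by
    obtain ⟨n, hn, hna⟩ := isOfFinAddOrder_iff_nsmul_eq_zero.mp hfin
    exact ha (htf n a hn hna)
  exact AddOrderable.of_isAddTorsionFree A
end

section
/- If Φ : (ℕ → ℕ) → (ℕ → ℕ) maps every infinite binary tree to a path through it, then Φ is discontinuous (with respect to the product topology on ℕ → ℕ, identifying trees with their characteristic functions): there exist a tree T and a sequence of trees Tₖ converging to T with Φ(Tₖ) not converging to Φ(T). -/
/-! The trees `headTree b k`, which contain every sequence of length at most `k` but above that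
level only those starting with `b`, converge pointwise to the full binary tree as `k → ∞`.
Taking `b` opposite to the first bit of `Φ univ`, every path through `headTree b k` starts with `b`,
so the first bit of `Φ (headTree b k)` never agrees with that of `Φ univ`. -/

def IsTree (T : Set (List Bool)) : Prop :=
  ∀ σ ∈ T, ∀ τ : List Bool, τ <+: σ → τ ∈ T

def InfTree (T : Set (List Bool)) : Prop :=
  IsTree T ∧ ∀ n : ℕ, ∃ σ ∈ T, σ.length = n

def IsPath (β : ℕ → Bool) (T : Set (List Bool)) : Prop :=
  ∀ n : ℕ, (List.ofFn fun i : Fin n => β i) ∈ T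

theorem infTree_univ : InfTree Set.univ :=
  ⟨fun _ _ _ _ => trivial, fun n => ⟨List.replicate n true, trivial, List.length_replicate⟩⟩

def headTree (b : Bool) (k : ℕ) : Set (List Bool) :=
  {σ | σ.length ≤ k ∨ σ.head? = some b}

theorem mem_headTree_of_length_le {b : Bool} {k : ℕ} {σ : List Bool} (h : σ.length ≤ k) :
    σ ∈ headTree b k :=
  Or.inl h

theorem infTree_headTree (b : Bool) (k : ℕ) : InfTree (headTree b k) := by
  refine ⟨?_, fun n => ⟨List.replicate n b, ?_, List.length_replicate⟩⟩
  · rintro σ hσ τ ⟨t, rfl⟩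
    rcases hσ with hlen | hhead
    · exact Or.inl (by rw [List.length_append] at hlen; omega)
    · rcases τ with _ | ⟨a, τ⟩
      · exact Or.inl (Nat.zero_le _)
      · exact Or.inr hhead
  · rcases n with _ | n
    · exact Or.inl (Nat.zero_le _)
    · exact Or.inr rfl

theorem IsPath.head_eq_of_headTree {β : ℕ → Bool} {b : Bool} {k : ℕ}
    (hβ : IsPath β (headTree b k)) : β 0 = b := by
  rcases hβ (k + 1) with hlen | hhead
  · simp at hlen
  · simpa [List.ofFn_succ] using hhead

theorem stmt18 (Φ : Set (List Bool) → (ℕ → Bool))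
    (hΦ : ∀ T, InfTree T → IsPath (Φ T) T) :
    ∃ (T : Set (List Bool)) (Ts : ℕ → Set (List Bool)),
      InfTree T ∧ (∀ k, InfTree (Ts k)) ∧
      (∀ σ : List Bool, ∃ K, ∀ k ≥ K, (σ ∈ Ts k ↔ σ ∈ T)) ∧
      ¬(∀ n : ℕ, ∃ K, ∀ k ≥ K, Φ (Ts k) n = Φ T n) := by
  set b := Φ Set.univ 0
  refine ⟨Set.univ, headTree (!b), infTree_univ, infTree_headTree (!b), ?_, ?_⟩
  · exact fun σ => ⟨σ.length, fun k hk => iff_of_true (mem_headTree_of_length_le hk) trivial⟩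
  · intro hconv
    obtain ⟨K, hK⟩ := hconv 0
    have hhead : Φ (headTree (!b) K) 0 = !b :=
      (hΦ _ (infTree_headTree (!b) K)).head_eq_of_headTree
    exact Bool.not_ne_self b (hhead.symm.trans (hK K le_rfl))
end
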